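/- Let n ≥ 2 be an integer, ε_n = e^{2πi/n}, and let C be the sequence of Ramanujan sums C_k = Σ_{1 ≤ j ≤ n, gcd(j,n)=1} ε_n^{kj}. Let r, p ∈ ℤ with r + p = 1, let q ∈ ℂ, λ ∈ ℂ with λ^n ≠ 1, and let m ≥ 1 be an integer. Then (-1)^{p-1} m · E_{m,n}^{r,p}(nq,λ;C) = φ(n) · B_m(nq,λ) - Σ_{i=0}^{m} Σ_{k=0}^{m-i} (n^{m-k} m!)/(i! k!) · B_i(λ^n) · V_n^{(k)}(λ) · q^{m-i-k}/(m-i-k)!, where B_i(λ) := B_i(0,λ), V_n^{(k)}(λ) := Σ_{1 ≤ j ≤ n, gcd(j,n)=1} j^k λ^j, and φ is Euler's totient function. -/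

import Mathlib

open Finset

/-- `eps n = e^{2πi/n}`, a primitive `n`-th root of unity in `ℂ`. -/
noncomputable def eps (n : ℕ) : ℂ := Complex.exp (2 * Real.pi * Complex.I / n)

/-- `expPS q = e^{qt} = Σ_j q^j t^j / j!` as a formal power series in `ℂ[[t]]`. -/
noncomputable def expPS (q : ℂ) : PowerSeries ℂ :=
  PowerSeries.mk fun j => q ^ j / j.factorial

/-- The Dedekind sum
`E_{m,n}^{r,p}(q,λ;C) = Σ_{k=1}^{n-1} ε_n^{-kr} H_{m-1}^{(p)}(q,λ,ε_n^{-k}) C_{-k} / (1-ε_n^k)^p`,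
where `H p m q λ γ` denotes the generalized Frobenius–Euler polynomial `H_m^{(p)}(q,λ,γ)`. -/
noncomputable def dedekindE (H : ℤ → ℕ → ℂ → ℂ → ℂ → ℂ) (n m : ℕ) (r p : ℤ)
    (q lam : ℂ) (Cf : ℤ → ℂ) : ℂ :=
  ∑ k ∈ Finset.Ico 1 n,
    eps n ^ (-(k : ℤ) * r) * H p (m - 1) q lam (eps n ^ (-(k : ℤ))) * Cf (-(k : ℤ))
      / (1 - eps n ^ (k : ℤ)) ^ p

/-- `V_n^{(k)}(λ) = Σ_{1≤j≤n, gcd(j,n)=1} j^k λ^j`. -/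
noncomputable def V (n k : ℕ) (lam : ℂ) : ℂ :=
  ∑ j ∈ (Finset.Icc 1 n).filter (fun j => Nat.gcd j n = 1), (j : ℂ) ^ k * lam ^ j

section Helpers

open PowerSeries

noncomputable def gam (n : ℕ) (k : ℕ) : ℂ := eps n ^ (-(k : ℤ))

lemma eps_prim {n : ℕ} (hn : 2 ≤ n) : IsPrimitiveRoot (eps n) n := by
  have := Complex.isPrimitiveRoot_exp n (by omega)
  exact this

lemma eps_ne_zero {n : ℕ} : eps n ≠ 0 := Complex.exp_ne_zero _

lemma gam_pow_n {n : ℕ} (hn : 2 ≤ n) (k : ℕ) : gam n k ^ n = 1 := by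
  have h := (eps_prim hn).pow_eq_one
  rw [gam, ← zpow_natCast, ← zpow_mul]
  have : (-(k:ℤ)) * n = n * (-(k:ℤ)) := by ring
  rw [this, zpow_mul, zpow_natCast, h, one_zpow]

lemma expPS_eq_rescale (q : ℂ) : expPS q = rescale q (PowerSeries.exp ℂ) := by
  ext m
  simp [expPS, coeff_rescale, PowerSeries.exp, div_eq_mul_inv, mul_comm]

lemma expPS_add (a b : ℂ) : expPS (a + b) = expPS a * expPS b := by
  rw [expPS_eq_rescale, expPS_eq_rescale, expPS_eq_rescale, exp_mul_exp_eq_exp_add]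

lemma expPS_zero : expPS 0 = 1 := by
  ext m
  simp [expPS, PowerSeries.coeff_one]
  rcases m with _|m <;> simp

lemma expPS_pow (j : ℕ) : expPS 1 ^ j = expPS (j : ℂ) := by
  induction j with
  | zero => simp [expPS_zero]
  | succ j ih => rw [pow_succ, ih, ← expPS_add]; norm_num

lemma rescale_expPS (c q : ℂ) : rescale c (expPS q) = expPS (c * q) := by
  rw [expPS_eq_rescale, expPS_eq_rescale, rescale_rescale, mul_comm]

lemma rescale_C' (a c : ℂ) : rescale a (C c) = C c := by
  ext i
  rw [coeff_rescale]
  rcases i with _|i <;> simp [PowerSeries.coeff_C]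

lemma constCoeff_expPS (q : ℂ) : constantCoeff (expPS q) = 1 := by
  have : constantCoeff (expPS q) = PowerSeries.coeff 0 (expPS q) := by
    rw [PowerSeries.coeff_zero_eq_constantCoeff]
  rw [this, expPS, PowerSeries.coeff_mk]
  simp

lemma gam_zero (n : ℕ) : gam n 0 = 1 := by simp [gam]

lemma gam_ne_one {n : ℕ} (hn : 2 ≤ n) {k : ℕ} (hk : k ∈ Finset.Ico 1 n) :
    gam n k ≠ 1 := by
  rw [Finset.mem_Ico] at hk
  rw [gam, Ne, (eps_prim hn).zpow_eq_one_iff_dvd, dvd_neg, Int.natCast_dvd_natCast]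
  intro h
  have := Nat.le_of_dvd (by omega) h
  omega

lemma lam_ne_gam {n : ℕ} (hn : 2 ≤ n) {lam : ℂ} (hlam : lam ^ n ≠ 1) (k : ℕ) :
    lam ≠ gam n k := by
  intro h
  exact hlam (h ▸ gam_pow_n hn k)

lemma Qlem {R : Type*} [CommRing R] (n : ℕ) (A : R) (γ : R) (hγ : γ ^ n = 1) :
    (A - γ) * (∑ s ∈ range n, A ^ s * γ ^ (n - 1 - s)) = A ^ n - 1 := by
  have := geom_sum₂_mul A γ n
  rw [mul_comm] at this
  rw [this, hγ]

lemma root_sum {n : ℕ} (hn : 2 ≤ n) (a : ℕ) :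
    ∑ k ∈ range n, gam n k ^ a = if (n : ℤ) ∣ (a : ℤ) then (n : ℂ) else 0 := by
  have hprim := eps_prim hn
  have hne := eps_ne_zero (n := n)
  have hrw : ∀ k : ℕ, gam n k ^ a = (eps n ^ (-(a:ℤ))) ^ k := by
    intro k
    rw [gam, ← zpow_natCast (eps n ^ (-(k:ℤ))), ← zpow_mul,
      ← zpow_natCast (eps n ^ (-(a:ℤ))), ← zpow_mul]
    ring_nf
  simp_rw [hrw]
  set x : ℂ := eps n ^ (-(a:ℤ)) with hx
  have hxn : x ^ n = 1 := by
    rw [hx, ← zpow_natCast, ← zpow_mul]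
    have : (-(a:ℤ)) * n = n * (-(a:ℤ)) := by ring
    rw [this, zpow_mul, zpow_natCast, hprim.pow_eq_one, one_zpow]
  by_cases hd : (n : ℤ) ∣ (a : ℤ)
  · have hx1 : x = 1 := by
      rw [hx, hprim.zpow_eq_one_iff_dvd]
      exact dvd_neg.mpr hd
    simp [hx1, hd]
  · have hx1 : x ≠ 1 := by
      rw [hx, Ne, hprim.zpow_eq_one_iff_dvd, dvd_neg]
      exact hd
    rw [geom_sum_eq hx1, hxn]
    simp [hd]

lemma L3 {n : ℕ} (hn : 2 ≤ n) {j : ℕ} (hj1 : 1 ≤ j) (hj2 : j ≤ n - 1)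
    (A : PowerSeries ℂ) :
    ∑ k ∈ range n, C (gam n k ^ (j+1)) *
        (∑ s ∈ range n, A ^ s * C (gam n k ^ (n - 1 - s)))
      = C (n : ℂ) * A ^ j := by
  have key : ∀ s ∈ range n,
      ∑ k ∈ range n, (gam n k ^ (j+1) * gam n k ^ (n - 1 - s))
        = if s = j then (n : ℂ) else 0 := by
    intro s hs
    rw [mem_range] at hs
    have hrw : ∀ k, gam n k ^ (j+1) * gam n k ^ (n - 1 - s) = gam n k ^ (n + j - s) := by
      intro k
      rw [← pow_add]
      congr 1
      omega
    simp_rw [hrw]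
    rw [root_sum hn]
    by_cases hsj : s = j
    · subst hsj
      rw [if_pos (by simp), if_pos rfl]
    · rw [if_neg, if_neg hsj]
      rw [Int.natCast_dvd_natCast]
      intro hdvd
      have h1 : n + j - s = n := Nat.eq_of_dvd_of_lt_two_mul (by omega) hdvd (by omega)
      omega
  calc ∑ k ∈ range n, C (gam n k ^ (j+1)) *
        (∑ s ∈ range n, A ^ s * C (gam n k ^ (n - 1 - s)))
      = ∑ k ∈ range n, ∑ s ∈ range n, A ^ s * C (gam n k ^ (j+1) * gam n k ^ (n-1-s)) := by
        refine Finset.sum_congr rfl fun k _ => ?_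
        rw [Finset.mul_sum]
        refine Finset.sum_congr rfl fun s _ => ?_
        rw [map_mul]
        ring
    _ = ∑ s ∈ range n, ∑ k ∈ range n, A ^ s * C (gam n k ^ (j+1) * gam n k ^ (n-1-s)) :=
        Finset.sum_comm
    _ = ∑ s ∈ range n, A ^ s * C (∑ k ∈ range n, gam n k ^ (j+1) * gam n k ^ (n-1-s)) := by
        refine Finset.sum_congr rfl fun s _ => ?_
        rw [map_sum, Finset.mul_sum]
    _ = ∑ s ∈ range n, A ^ s * C (if s = j then (n:ℂ) else 0) := by
        refine Finset.sum_congr rfl fun s hs => ?_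
        rw [key s hs]
    _ = C (n : ℂ) * A ^ j := by
        rw [Finset.sum_congr rfl (fun s _ => by
          rw [apply_ite (C), map_zero])]
        simp only [mul_ite, mul_zero]
        rw [Finset.sum_ite_eq' (range n) j (fun s => A ^ s * C (n:ℂ))]
        rw [if_pos (mem_range.mpr (by omega))]
        ring

lemma Pj {n : ℕ} (hn : 2 ≤ n) {lam : ℂ} (hlam : lam ^ n ≠ 1) (q : ℂ)
    (H : ℤ → ℕ → ℂ → ℂ → ℂ → ℂ)
    (hH : ∀ (p : ℤ) (q lam γ : ℂ), γ ≠ 1 → lam ≠ γ →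
      (PowerSeries.C lam * expPS 1 - PowerSeries.C γ) *
          PowerSeries.mk (fun m => H p m q lam γ / m.factorial)
        = PowerSeries.C ((1 - γ) ^ p) * expPS q)
    (B : ℕ → ℂ → ℂ → ℂ)
    (hB : ∀ (q lam : ℂ), lam ≠ 1 →
      (PowerSeries.C lam * expPS 1 - 1) *
          PowerSeries.mk (fun m => B m q lam / m.factorial)
        = PowerSeries.X * expPS q)
    (p : ℤ) {j : ℕ} (hj1 : 1 ≤ j) (hj2 : j ≤ n - 1) :
    PowerSeries.mk (fun i => B i ((n:ℂ)*q) lam / i.factorial)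
      + ∑ k ∈ Finset.Ico 1 n, C (gam n k ^ (j+1) * (1 - gam n k) ^ (-p)) *
          (X * PowerSeries.mk (fun i => H p i ((n:ℂ)*q) lam (gam n k) / i.factorial))
      = C (lam ^ j) *
          PowerSeries.mk (fun i => (n:ℂ)^i * B i (q + j/n) (lam^n) / i.factorial) := by
  have hn0 : (n:ℂ) ≠ 0 := Nat.cast_ne_zero.mpr (by omega)
  have hlam1 : lam ≠ 1 := fun h => hlam (by rw [h, one_pow])
  set A : PowerSeries ℂ := C lam * expPS 1 with hA
  set U : PowerSeries ℂ := A ^ n - 1 with hU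
  set Eq : PowerSeries ℂ := expPS ((n:ℂ)*q) with hEq
  set Bs : PowerSeries ℂ := PowerSeries.mk (fun i => B i ((n:ℂ)*q) lam / i.factorial) with hBs
  set Rj : PowerSeries ℂ := PowerSeries.mk (fun i => (n:ℂ)^i * B i (q + j/n) (lam^n) / i.factorial) with hRj
  set Gs : ℕ → PowerSeries ℂ := fun k => PowerSeries.mk (fun i => H p i ((n:ℂ)*q) lam (gam n k) / i.factorial) with hGs
  have hAn : A ^ n = C (lam^n) * expPS (n:ℂ) := by
    rw [hA, mul_pow, ← map_pow, expPS_pow]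
  have hUne : U ≠ 0 := by
    intro h
    have : constantCoeff U = 0 := by rw [h, map_zero]
    rw [hU, map_sub, map_pow, map_one, hA, map_mul, constantCoeff_C, constCoeff_expPS,
      mul_one] at this
    exact hlam (by linear_combination this)
  set Q : ℕ → PowerSeries ℂ := fun k => ∑ s ∈ range n, A ^ s * C (gam n k ^ (n - 1 - s)) with hQ
  have hQk : ∀ k, (A - C (gam n k)) * Q k = U := by
    intro k
    rw [hQ]
    have := Qlem n A (C (gam n k)) (by rw [← map_pow, gam_pow_n hn, map_one])
    simp only [← map_pow] at this
    exact this
  have hDk : ∀ k ∈ Finset.Ico 1 n,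
      (A - C (gam n k)) * (C ((1 - gam n k) ^ (-p)) * Gs k) = Eq := by
    intro k hk
    have hγ1 : gam n k ≠ 1 := gam_ne_one hn hk
    have h1γ : (1 : ℂ) - gam n k ≠ 0 := fun h => hγ1 (by linear_combination -h)
    have h := hH p ((n:ℂ)*q) lam (gam n k) hγ1 (lam_ne_gam hn hlam k)
    calc (A - C (gam n k)) * (C ((1 - gam n k) ^ (-p)) * Gs k)
        = C ((1 - gam n k) ^ (-p)) * ((A - C (gam n k)) * Gs k) := by ring
      _ = C ((1 - gam n k) ^ (-p)) * (C ((1 - gam n k) ^ p) * Eq) := by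
          rw [hGs, hA, hEq, h]
      _ = C ((1 - gam n k) ^ (-p) * (1 - gam n k) ^ p) * Eq := by rw [map_mul]; ring
      _ = Eq := by
          rw [← zpow_add₀ h1γ, neg_add_cancel, zpow_zero, map_one, one_mul]
  have hBsEq : (A - C 1) * Bs = X * Eq := by
    rw [map_one, hBs, hEq, hA]
    exact hB ((n:ℂ)*q) lam hlam1
  have hURj : U * Rj = C (n:ℂ) * X * expPS ((n:ℂ)*q + j) := by
    have h := hB (q + j/n) (lam^n) hlam
    have h2 := congrArg (rescale (n:ℂ)) h
    rw [map_mul, map_sub, map_mul, map_one, rescale_C', rescale_expPS, mul_one,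
      map_mul, rescale_X, rescale_expPS] at h2
    have hres : rescale (n:ℂ) (PowerSeries.mk fun m => B m (q + j/n) (lam^n) / m.factorial)
        = Rj := by
      ext i
      rw [coeff_rescale, PowerSeries.coeff_mk, hRj, PowerSeries.coeff_mk, mul_div_assoc]
    rw [hres] at h2
    have harg : (n:ℂ) * (q + j/n) = (n:ℂ)*q + j := by field_simp
    rw [harg] at h2
    rw [hU, hAn, h2]
  apply mul_left_cancel₀ hUne
  have hLHS : U * (Bs + ∑ k ∈ Finset.Ico 1 n, C (gam n k ^ (j+1) * (1 - gam n k) ^ (-p)) *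
      (X * Gs k))
      = (∑ k ∈ range n, C (gam n k ^ (j+1)) * Q k) * (X * Eq) := by
    rw [mul_add, Finset.mul_sum]
    have hsplit : ∑ k ∈ range n, C (gam n k ^ (j+1)) * Q k * (X * Eq)
        = C (gam n 0 ^ (j+1)) * Q 0 * (X * Eq)
          + ∑ k ∈ Finset.Ico 1 n, C (gam n k ^ (j+1)) * Q k * (X * Eq) := by
      rw [range_eq_Ico, Finset.sum_eq_sum_Ico_succ_bot (by omega)]
    rw [Finset.sum_mul, hsplit]
    congr 1
    · rw [gam_zero, one_pow, map_one, one_mul]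
      calc U * Bs = Q 0 * ((A - C 1) * Bs) := by
            rw [← hQk 0, gam_zero]; ring
        _ = Q 0 * (X * Eq) := by rw [hBsEq]
    · refine Finset.sum_congr rfl fun k hk => ?_
      rw [map_mul]
      calc U * (C (gam n k ^ (j+1)) * C ((1 - gam n k) ^ (-p)) * (X * Gs k))
          = C (gam n k ^ (j+1)) * Q k * (X * ((A - C (gam n k)) *
              (C ((1 - gam n k) ^ (-p)) * Gs k))) := by
            rw [← hQk k]; ring
        _ = C (gam n k ^ (j+1)) * Q k * (X * Eq) := by rw [hDk k hk]
  rw [hLHS, L3 hn hj1 hj2, hA]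
  have : (C lam * expPS 1) ^ j = C (lam ^ j) * expPS (j:ℂ) := by
    rw [mul_pow, ← map_pow, expPS_pow]
  rw [this]
  calc C (n:ℂ) * (C (lam ^ j) * expPS (j:ℂ)) * (X * Eq)
      = C (lam ^ j) * (C (n:ℂ) * X * (expPS (j:ℂ) * expPS ((n:ℂ)*q))) := by
        rw [hEq]; ring
    _ = C (lam ^ j) * (C (n:ℂ) * X * expPS ((n:ℂ)*q + j)) := by
        rw [← expPS_add, add_comm]
    _ = C (lam ^ j) * (U * Rj) := by rw [hURj]
    _ = U * (C (lam ^ j) * Rj) := by ring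

lemma Badd (B : ℕ → ℂ → ℂ → ℂ)
    (hB : ∀ (q lam : ℂ), lam ≠ 1 →
      (PowerSeries.C lam * expPS 1 - 1) *
          PowerSeries.mk (fun m => B m q lam / m.factorial)
        = PowerSeries.X * expPS q)
    {μ : ℂ} (hμ : μ ≠ 1) (x : ℂ) (m : ℕ) :
    B m x μ / m.factorial
      = ∑ i ∈ range (m+1), (B i 0 μ / i.factorial) * (x^(m-i) / (m-i).factorial) := by
  have hne : (C μ * expPS 1 - 1) ≠ 0 := by
    intro h
    have : constantCoeff (C μ * expPS 1 - 1) = 0 := by rw [h, map_zero]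
    rw [map_sub, map_mul, constantCoeff_C, constCoeff_expPS, map_one, mul_one] at this
    exact hμ (by linear_combination this)
  have key : PowerSeries.mk (fun i => B i x μ / i.factorial)
      = PowerSeries.mk (fun i => B i 0 μ / i.factorial) * expPS x := by
    apply mul_left_cancel₀ hne
    rw [hB x μ hμ, ← mul_assoc, hB 0 μ hμ, expPS_zero]
    ring
  have := congrArg (PowerSeries.coeff m) key
  rw [PowerSeries.coeff_mk, PowerSeries.coeff_mul] at this
  rw [this, Finset.Nat.sum_antidiagonal_eq_sum_range_succ_mk]
  refine Finset.sum_congr rfl fun i _ => ?_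
  rw [PowerSeries.coeff_mk, expPS, PowerSeries.coeff_mk]

lemma totient_card {n : ℕ} (hn : 2 ≤ n) :
    ((Finset.Icc 1 n).filter (fun j => Nat.gcd j n = 1)).card = n.totient := by
  rw [Nat.totient_eq_card_coprime]
  congr 1
  ext j
  simp only [mem_filter, mem_Icc, mem_range, Nat.Coprime]
  constructor
  · rintro ⟨⟨h1, h2⟩, h3⟩
    refine ⟨?_, by rw [Nat.gcd_comm]; exact h3⟩
    rcases Nat.lt_or_ge j n with h | h
    · exact h
    · have : j = n := by omega
      subst this
      rw [Nat.gcd_self] at h3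
      omega
  · rintro ⟨h1, h3⟩
    rw [Nat.gcd_comm] at h3
    refine ⟨⟨?_, by omega⟩, h3⟩
    rcases Nat.eq_zero_or_pos j with h | h
    · subst h; rw [Nat.gcd_zero_left] at h3; omega
    · exact h

lemma mem_JS {n : ℕ} (hn : 2 ≤ n) {j : ℕ}
    (hj : j ∈ (Finset.Icc 1 n).filter (fun j => Nat.gcd j n = 1)) :
    1 ≤ j ∧ j ≤ n - 1 := by
  rw [mem_filter, mem_Icc] at hj
  obtain ⟨⟨h1, h2⟩, h3⟩ := hj
  refine ⟨h1, ?_⟩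
  rcases Nat.lt_or_ge j n with h | h
  · omega
  · have : j = n := by omega
    subst this
    rw [Nat.gcd_self] at h3
    omega

lemma scalar_step {n : ℕ} (hn : 2 ≤ n) (r p : ℤ) (hrp : r + p = 1) (k j : ℕ)
    (hζk : eps n ^ (-(k:ℤ)) * eps n ^ ((k:ℤ)) = 1) :
    eps n ^ (-(k : ℤ) * r) * eps n ^ (-(k:ℤ) * (j:ℤ)) * ((1 - eps n ^ (k:ℤ)) ^ p)⁻¹
      = (-1:ℂ) ^ p * (gam n k ^ (j+1) * (1 - gam n k) ^ (-p)) := by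
  have hζ : eps n ≠ 0 := eps_ne_zero
  have hw : ((1 - eps n ^ (k:ℤ)) ^ p)⁻¹ = (1 - eps n ^ (k:ℤ)) ^ (-p) := (zpow_neg _ _).symm
  have hγz : ∀ a : ℤ, (eps n ^ (-(k:ℤ))) ^ a = eps n ^ ((-(k:ℤ)) * a) :=
    fun a => (zpow_mul _ _ _).symm
  have hγn : gam n k ^ (j+1) = eps n ^ ((-(k:ℤ)) * ((j:ℤ)+1)) := by
    rw [gam, ← zpow_natCast (eps n ^ (-(k:ℤ))) (j+1), hγz]
    norm_num
  have h1 : (1 : ℂ) - gam n k = (-1 : ℂ) * eps n ^ (-(k:ℤ)) * (1 - eps n ^ (k:ℤ)) := by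
    rw [gam]
    linear_combination -hζk
  have h1γ : (1 - gam n k) ^ (-p)
      = (-1:ℂ)^(-p) * eps n ^ ((k:ℤ)*p) * (1 - eps n ^ (k:ℤ))^(-p) := by
    rw [h1, mul_zpow, mul_zpow, hγz]
    congr 2
    congr 1
    ring
  have hm1 : (-1:ℂ) ^ p * ((-1:ℂ) ^ (-p)) = 1 := by
    rw [← zpow_add₀ (by norm_num : (-1:ℂ) ≠ 0)]
    simp
  have hexp : (-(k:ℤ)) * r + (-(k:ℤ)) * (j:ℤ) = (-(k:ℤ)) * ((j:ℤ)+1) + (k:ℤ)*p := by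
    linear_combination (-(k:ℤ)) * hrp
  calc eps n ^ (-(k : ℤ) * r) * eps n ^ (-(k:ℤ) * (j:ℤ)) * ((1 - eps n ^ (k:ℤ)) ^ p)⁻¹
      = eps n ^ ((-(k:ℤ)) * r + (-(k:ℤ)) * (j:ℤ)) * (1 - eps n ^ (k:ℤ))^(-p) := by
        rw [hw, ← zpow_add₀ hζ]
    _ = eps n ^ ((-(k:ℤ)) * ((j:ℤ)+1)) * eps n ^ ((k:ℤ)*p) * (1 - eps n ^ (k:ℤ))^(-p) := by
        rw [hexp, zpow_add₀ hζ]
    _ = (-1:ℂ)^p * (eps n ^ ((-(k:ℤ))*((j:ℤ)+1)) *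
          ((-1:ℂ)^(-p) * eps n ^ ((k:ℤ)*p) * (1 - eps n ^ (k:ℤ))^(-p))) := by
        linear_combination (-(eps n ^ ((-(k:ℤ))*((j:ℤ)+1)) * eps n ^ ((k:ℤ)*p) *
          (1 - eps n ^ (k:ℤ))^(-p))) * hm1
    _ = (-1:ℂ) ^ p * (gam n k ^ (j+1) * (1 - gam n k) ^ (-p)) := by
        rw [hγn, h1γ]

end Helpers

/-- The simultaneous multiplication formula for the Ramanujan sums
`C_k = Σ_{1≤j≤n, gcd(j,n)=1} ε_n^{kj}` at `r + p = 1`, in expanded form: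
`(-1)^{p-1} m E_{m,n}^{r,p}(nq,λ;C)
  = φ(n) B_m(nq,λ)
    - Σ_{i=0}^m Σ_{k=0}^{m-i} (n^{m-k} m!)/(i! k!) B_i(λ^n) V_n^{(k)}(λ) q^{m-i-k}/(m-i-k)!`,
where `B_i(λ) = B_i(0,λ)` are the Apostol–Bernoulli numbers. -/
theorem simultaneous_multiplication_formula_ramanujan_expanded
    (n : ℕ) (hn : 2 ≤ n)
    (Cf : ℤ → ℂ)
    (hCf : ∀ k : ℤ, Cf k = ∑ j ∈ (Finset.Icc 1 n).filter (fun j => Nat.gcd j n = 1),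
      eps n ^ (k * j))
    (H : ℤ → ℕ → ℂ → ℂ → ℂ → ℂ)
    (hH : ∀ (p : ℤ) (q lam γ : ℂ), γ ≠ 1 → lam ≠ γ →
      (PowerSeries.C lam * expPS 1 - PowerSeries.C γ) *
          PowerSeries.mk (fun m => H p m q lam γ / m.factorial)
        = PowerSeries.C ((1 - γ) ^ p) * expPS q)
    (B : ℕ → ℂ → ℂ → ℂ)
    (hB : ∀ (q lam : ℂ), lam ≠ 1 →
      (PowerSeries.C lam * expPS 1 - 1) *
          PowerSeries.mk (fun m => B m q lam / m.factorial)
        = PowerSeries.X * expPS q)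
    (r p : ℤ) (hrp : r + p = 1) (q lam : ℂ) (hlam : lam ^ n ≠ 1) (m : ℕ) (hm : 1 ≤ m) :
    (-1 : ℂ) ^ (p - 1) * m * dedekindE H n m r p ((n : ℂ) * q) lam Cf
      = (Nat.totient n : ℂ) * B m ((n : ℂ) * q) lam -
          ∑ i ∈ Finset.range (m + 1), ∑ k ∈ Finset.range (m - i + 1),
            ((n : ℂ) ^ (m - k) * (m.factorial : ℂ) / ((i.factorial : ℂ) * (k.factorial : ℂ))) *
              B i 0 (lam ^ n) * V n k lam * q ^ (m - i - k) / ((m - i - k).factorial : ℂ) := by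
  have hn0 : (n:ℂ) ≠ 0 := Nat.cast_ne_zero.mpr (by omega)
  have hlam1 : lam ≠ 1 := fun h => hlam (by rw [h, one_pow])
  set JS := (Finset.Icc 1 n).filter (fun j => Nat.gcd j n = 1) with hJS
  obtain ⟨m', rfl⟩ : ∃ m', m = m' + 1 := ⟨m - 1, by omega⟩
  set M := m' + 1 with hM
  -- the inner double sum S
  set S : ℂ := ∑ j ∈ JS, ∑ k ∈ Finset.Ico 1 n,
      (gam n k ^ (j+1) * (1 - gam n k) ^ (-p)) * H p m' ((n:ℂ)*q) lam (gam n k) with hS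
  -- Step 1: coefficient extraction from Pj
  have hEj : ∀ j ∈ JS, B M ((n:ℂ)*q) lam
      + (M:ℂ) * (∑ k ∈ Finset.Ico 1 n,
          (gam n k ^ (j+1) * (1 - gam n k) ^ (-p)) * H p m' ((n:ℂ)*q) lam (gam n k))
      = lam^j * ((n:ℂ)^M * B M (q + j/n) (lam^n)) := by
    intro j hj
    obtain ⟨hj1, hj2⟩ := mem_JS hn hj
    have hpj := Pj hn hlam q H hH B hB p hj1 hj2
    have hc := congrArg (PowerSeries.coeff M) hpj
    rw [map_add, PowerSeries.coeff_mk, map_sum, PowerSeries.coeff_C_mul,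
      PowerSeries.coeff_mk] at hc
    have hterm : ∀ k ∈ Finset.Ico 1 n,
        (PowerSeries.coeff M) (PowerSeries.C (gam n k ^ (j+1) * (1 - gam n k) ^ (-p)) *
          (PowerSeries.X * PowerSeries.mk
            (fun i => H p i ((n:ℂ)*q) lam (gam n k) / i.factorial)))
        = (gam n k ^ (j+1) * (1 - gam n k) ^ (-p)) *
            (H p m' ((n:ℂ)*q) lam (gam n k) / m'.factorial) := by
      intro k _
      rw [PowerSeries.coeff_C_mul, hM, PowerSeries.coeff_succ_X_mul, PowerSeries.coeff_mk]
    rw [Finset.sum_congr rfl hterm] at hc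
    -- now multiply hc by M!
    have hfac : (M.factorial : ℂ) = (M:ℂ) * (m'.factorial : ℂ) := by
      rw [hM, Nat.factorial_succ]
      push_cast
      ring
    have hm'0 : (m'.factorial : ℂ) ≠ 0 := Nat.cast_ne_zero.mpr (Nat.factorial_ne_zero _)
    have hM0 : (M.factorial : ℂ) ≠ 0 := Nat.cast_ne_zero.mpr (Nat.factorial_ne_zero _)
    have hmul := congrArg (fun z => (M.factorial : ℂ) * z) hc
    simp only [Finset.mul_sum, mul_add] at hmul
    rw [mul_div_cancel₀ _ hM0] at hmul
    have hterm2 : ∀ k ∈ Finset.Ico 1 n,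
        (M.factorial : ℂ) * ((gam n k ^ (j+1) * (1 - gam n k) ^ (-p)) *
            (H p m' ((n:ℂ)*q) lam (gam n k) / m'.factorial))
        = (M:ℂ) * ((gam n k ^ (j+1) * (1 - gam n k) ^ (-p)) *
            H p m' ((n:ℂ)*q) lam (gam n k)) := by
      intro k _
      have hcan' : (m'.factorial:ℂ) * (m'.factorial:ℂ)⁻¹ = 1 := mul_inv_cancel₀ hm'0
      linear_combination ((gam n k ^ (j+1) * (1 - gam n k) ^ (-p)) *
          H p m' ((n:ℂ)*q) lam (gam n k) * ((m'.factorial:ℂ))⁻¹) * hfac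
        + ((M:ℂ) * (gam n k ^ (j+1) * (1 - gam n k) ^ (-p)) *
          H p m' ((n:ℂ)*q) lam (gam n k)) * hcan'
    rw [Finset.sum_congr rfl hterm2, ← Finset.mul_sum] at hmul
    have hcan : (M.factorial:ℂ) * (M.factorial:ℂ)⁻¹ = 1 := mul_inv_cancel₀ hM0
    linear_combination hmul + (lam^j * (n:ℂ)^M * B M (q + j/n) (lam^n)) * hcan
  -- Step 2: dedekindE in terms of S
  have hζk1 : ∀ k : ℕ, eps n ^ (-(k:ℤ)) * eps n ^ ((k:ℤ)) = 1 := by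
    intro k
    rw [← zpow_add₀ (eps_ne_zero (n := n))]
    simp
  have hD : dedekindE H n M r p ((n:ℂ)*q) lam Cf = (-1:ℂ)^p * S := by
    rw [dedekindE, hS]
    have hstep : ∀ k ∈ Finset.Ico 1 n,
        eps n ^ (-(k : ℤ) * r) * H p (M - 1) ((n:ℂ)*q) lam (eps n ^ (-(k : ℤ))) * Cf (-(k : ℤ))
          / (1 - eps n ^ (k : ℤ)) ^ p
        = ∑ j ∈ JS, (-1:ℂ)^p * ((gam n k ^ (j+1) * (1 - gam n k) ^ (-p)) *
            H p m' ((n:ℂ)*q) lam (gam n k)) := by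
      intro k hk
      rw [hCf (-(k:ℤ))]
      have hM1 : M - 1 = m' := by omega
      rw [hM1, div_eq_mul_inv, Finset.mul_sum, Finset.sum_mul]
      refine Finset.sum_congr rfl fun j hj => ?_
      have := scalar_step hn r p hrp k j (hζk1 k)
      calc eps n ^ (-(k : ℤ) * r) * H p m' ((n:ℂ)*q) lam (eps n ^ (-(k : ℤ)))
            * eps n ^ (-(k:ℤ) * (j:ℤ)) * ((1 - eps n ^ (k:ℤ)) ^ p)⁻¹
          = (eps n ^ (-(k : ℤ) * r) * eps n ^ (-(k:ℤ) * (j:ℤ)) *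
              ((1 - eps n ^ (k:ℤ)) ^ p)⁻¹) * H p m' ((n:ℂ)*q) lam (gam n k) := by
            rw [gam]; ring
        _ = ((-1:ℂ)^p * (gam n k ^ (j+1) * (1 - gam n k) ^ (-p))) *
              H p m' ((n:ℂ)*q) lam (gam n k) := by rw [this]
        _ = (-1:ℂ)^p * ((gam n k ^ (j+1) * (1 - gam n k) ^ (-p)) *
              H p m' ((n:ℂ)*q) lam (gam n k)) := by ring
    rw [Finset.sum_congr rfl hstep]
    rw [Finset.sum_comm]
    rw [Finset.mul_sum]
    refine Finset.sum_congr rfl fun j _ => ?_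
    rw [Finset.mul_sum]
  -- Step 3: sum hEj over JS
  have hsum := Finset.sum_congr rfl hEj
  rw [Finset.sum_add_distrib, Finset.sum_const, ← Finset.mul_sum, ← hS] at hsum
  rw [hJS] at hsum
  rw [totient_card hn] at hsum
  rw [← hJS] at hsum
  -- Step 4: sign
  have hsign : (-1:ℂ)^(p-1) * (-1:ℂ)^p = -1 := by
    rw [← zpow_add₀ (by norm_num : (-1:ℂ) ≠ 0)]
    have : p - 1 + p = 2*p - 1 := by ring
    rw [this, zpow_sub₀ (by norm_num : (-1:ℂ) ≠ 0), zpow_mul]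
    norm_num
  -- Step 5: T equals the double sum
  have hT : ∑ j ∈ JS, lam^j * ((n:ℂ)^M * B M (q + j/n) (lam^n))
      = ∑ i ∈ Finset.range (M + 1), ∑ k ∈ Finset.range (M - i + 1),
          ((n : ℂ) ^ (M - k) * (M.factorial : ℂ) / ((i.factorial : ℂ) * (k.factorial : ℂ))) *
            B i 0 (lam ^ n) * V n k lam * q ^ (M - i - k) / ((M - i - k).factorial : ℂ) := by
    have hMfac : ((M.factorial : ℂ)) ≠ 0 := Nat.cast_ne_zero.mpr (Nat.factorial_ne_zero _)
    -- expand B M (q+j/n) via Badd and add_pow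
    have hBM : ∀ j : ℕ, B M (q + j/n) (lam^n)
        = ∑ i ∈ Finset.range (M+1), ∑ k ∈ Finset.range (M-i+1),
            (M.factorial : ℂ) * (B i 0 (lam^n) / i.factorial) *
              (((j:ℂ)/n)^k * q^(M-i-k) * ((M-i).choose k : ℂ)) / ((M-i).factorial : ℂ) := by
      intro j
      have h1 := Badd B hB hlam (q + j/n) M
      have h2 : B M (q + j/n) (lam^n)
          = (M.factorial : ℂ) * ∑ i ∈ range (M+1),
              (B i 0 (lam^n) / i.factorial) * ((q + j/n)^(M-i) / (M-i).factorial) := by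
        rw [← h1, mul_div_cancel₀ _ hMfac]
      rw [h2, Finset.mul_sum]
      refine Finset.sum_congr rfl fun i hi => ?_
      have hpow : (q + (j:ℂ)/n)^(M-i)
          = ∑ k ∈ Finset.range (M-i+1), ((j:ℂ)/n)^k * q^(M-i-k) * ((M-i).choose k : ℂ) := by
        rw [add_comm q ((j:ℂ)/n), add_pow]
      rw [hpow]
      simp only [Finset.sum_div, Finset.mul_sum]
      refine Finset.sum_congr rfl fun k hk => ?_
      ring
    -- rewrite T as triple sum, swap, compare with target triple sum
    calc ∑ j ∈ JS, lam^j * ((n:ℂ)^M * B M (q + j/n) (lam^n))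
        = ∑ j ∈ JS, ∑ i ∈ Finset.range (M+1), ∑ k ∈ Finset.range (M-i+1),
            lam^j * ((n:ℂ)^M * ((M.factorial : ℂ) * (B i 0 (lam^n) / i.factorial) *
              (((j:ℂ)/n)^k * q^(M-i-k) * ((M-i).choose k : ℂ)) / ((M-i).factorial : ℂ))) := by
          refine Finset.sum_congr rfl fun j _ => ?_
          rw [hBM j, Finset.mul_sum, Finset.mul_sum]
          refine Finset.sum_congr rfl fun i _ => ?_
          rw [Finset.mul_sum, Finset.mul_sum]
      _ = ∑ i ∈ Finset.range (M+1), ∑ k ∈ Finset.range (M-i+1), ∑ j ∈ JS,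
            lam^j * ((n:ℂ)^M * ((M.factorial : ℂ) * (B i 0 (lam^n) / i.factorial) *
              (((j:ℂ)/n)^k * q^(M-i-k) * ((M-i).choose k : ℂ)) / ((M-i).factorial : ℂ))) := by
          rw [Finset.sum_comm]
          refine Finset.sum_congr rfl fun i _ => ?_
          rw [Finset.sum_comm]
      _ = ∑ i ∈ Finset.range (M + 1), ∑ k ∈ Finset.range (M - i + 1),
          ((n : ℂ) ^ (M - k) * (M.factorial : ℂ) / ((i.factorial : ℂ) * (k.factorial : ℂ))) *
            B i 0 (lam ^ n) * V n k lam * q ^ (M - i - k) / ((M - i - k).factorial : ℂ) := by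
          refine Finset.sum_congr rfl fun i hi => Finset.sum_congr rfl fun k hk => ?_
          rw [mem_range] at hi hk
          rw [V, ← hJS]
          simp only [Finset.mul_sum, Finset.sum_mul, Finset.sum_div]
          refine Finset.sum_congr rfl fun j _ => ?_
          have hch : (((M-i).choose k : ℂ)) * (k.factorial : ℂ) * ((M-i-k).factorial : ℂ)
              = ((M-i).factorial : ℂ) := by
            exact_mod_cast Nat.choose_mul_factorial_mul_factorial (by omega : k ≤ M - i)
          have hnp : (n:ℂ)^(M-k) * (n:ℂ)^k = (n:ℂ)^M := by
            rw [← pow_add]; congr 1; omega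
          have h1 : (i.factorial : ℂ) ≠ 0 := Nat.cast_ne_zero.mpr (Nat.factorial_ne_zero _)
          have h2 : (k.factorial : ℂ) ≠ 0 := Nat.cast_ne_zero.mpr (Nat.factorial_ne_zero _)
          have h3 : ((M-i).factorial : ℂ) ≠ 0 := Nat.cast_ne_zero.mpr (Nat.factorial_ne_zero _)
          have h4 : ((M-i-k).factorial : ℂ) ≠ 0 :=
            Nat.cast_ne_zero.mpr (Nat.factorial_ne_zero _)
          have h5 : (((M-i).choose k : ℂ)) ≠ 0 :=
            Nat.cast_ne_zero.mpr (Nat.choose_pos (by omega : k ≤ M - i)).ne'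
          rw [div_pow, ← hch, ← hnp]
          field_simp
  -- Final assembly
  rw [hD, ← hT]
  rw [nsmul_eq_mul] at hsum
  linear_combination ((M:ℂ) * S) * hsign - hsum
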